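/- arXiv:2007.10976 — 2 statements merged into one kernel-verified Lean document; each statement's English description precedes it below -/
import Mathlib

section
/- Let ε ∈ (0,1/4], k ≥ 1, let W be a channel from [2k] to a finite alphabet 𝒴, let z ∈ {−1,+1}^k, let i ∈ {1,…,k}, and let z^{⊕i} denote z with its i-th coordinate flipped. Writing W∘p for the output distribution y ↦ Σ_{x∈[2k]} p(x) W(y|x), one has χ²( W∘p_z ‖ W∘p_{z^{⊕i}} ) ≤ (16 ε² / k) · H(W)_{i,i}, and consequently the KL divergence in nats satisfies KL( W∘p_z ‖ W∘p_{z^{⊕i}} ) ≤ (16 ε² / k) · H(W)_{i,i}. -/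
/-!
Flipping `z i` only moves mass `2ε/k` between the points `2i-1` and `2i`, so the two output
distributions differ by `(2ε z_i / k) (W(· | 2i-1) - W(· | 2i))`. For `ε ≤ 1/4` every `p_z` is
at least `1/(4k)` pointwise, so the reference output distribution dominates
`(1/(4k)) Σ_x W(· | x)`; putting this into the χ² denominators gives `16ε²/k · H(W)_{i,i}`.
Finally `KL ≤ χ²` termwise from `log t ≤ t - 1`.
-/

open Finset

namespace Paper

/-- A probability distribution on a finite type, given by its mass function. -/
def IsDist {α : Type*} [Fintype α] (p : α → ℝ) : Prop :=
  (∀ a, 0 ≤ p a) ∧ ∑ a, p a = 1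

/-- A channel (row-stochastic kernel) from `α` to the finite alphabet `𝒴`. -/
def IsChannel {α 𝒴 : Type*} [Fintype α] [Fintype 𝒴] (W : α → 𝒴 → ℝ) : Prop :=
  ∀ x, IsDist (W x)

/-- Total variation distance between mass functions on a finite type. -/
noncomputable def tvDist {α : Type*} [Fintype α] (p q : α → ℝ) : ℝ :=
  (∑ a, |p a - q a|) / 2

/-- The element `2i-1` (1-indexed) of `[2k]`, i.e. index `2i` in 0-indexed terms. -/
def lo {k : ℕ} (i : Fin k) : Fin (2 * k) := ⟨2 * i.val, by have := i.isLt; omega⟩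

/-- The element `2i` (1-indexed) of `[2k]`, i.e. index `2i+1` in 0-indexed terms. -/
def hi {k : ℕ} (i : Fin k) : Fin (2 * k) := ⟨2 * i.val + 1, by have := i.isLt; omega⟩

/-- The channel information matrix `H(W)`  (division by `0` yields `0` in Lean,
matching the convention that terms with zero denominator vanish). -/
noncomputable def HMat (k : ℕ) {𝒴 : Type*} [Fintype 𝒴] (W : Fin (2 * k) → 𝒴 → ℝ) :
    Matrix (Fin k) (Fin k) ℝ := fun i j =>
  ∑ y, (W (lo i) y - W (hi i) y) * (W (lo j) y - W (hi j) y) / (∑ x, W x y)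

/-- Nuclear norm of a real symmetric matrix (sum of absolute values of eigenvalues). -/
noncomputable def nucNorm {k : ℕ} (A : Matrix (Fin k) (Fin k) ℝ) : ℝ :=
  if h : A.IsHermitian then ∑ i, |h.eigenvalues i| else 0

/-- Operator (spectral) norm of a real symmetric matrix. -/
noncomputable def opNorm {k : ℕ} (A : Matrix (Fin k) (Fin k) ℝ) : ℝ :=
  if h : A.IsHermitian then ⨆ i, |h.eigenvalues i| else 0

/-- Frobenius norm of a matrix. -/
noncomputable def frobNorm {k : ℕ} (A : Matrix (Fin k) (Fin k) ℝ) : ℝ :=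
  Real.sqrt (∑ i, ∑ j, (A i j) ^ 2)

/-- `‖𝒲‖_*`, the maximal nuclear norm of `H(W)` over the family. -/
noncomputable def famNuc (k : ℕ) {𝒴 : Type*} [Fintype 𝒴]
    (𝒲 : Set (Fin (2 * k) → 𝒴 → ℝ)) : ℝ :=
  sSup ((fun W => nucNorm (HMat k W)) '' 𝒲)

/-- `‖𝒲‖_op`, the maximal operator norm of `H(W)` over the family. -/
noncomputable def famOp (k : ℕ) {𝒴 : Type*} [Fintype 𝒴]
    (𝒲 : Set (Fin (2 * k) → 𝒴 → ℝ)) : ℝ :=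
  sSup ((fun W => opNorm (HMat k W)) '' 𝒲)

/-- `‖𝒲‖_F`, the maximal Frobenius norm of `H(W)` over the family. -/
noncomputable def famFrob (k : ℕ) {𝒴 : Type*} [Fintype 𝒴]
    (𝒲 : Set (Fin (2 * k) → 𝒴 → ℝ)) : ℝ :=
  sSup ((fun W => frobNorm (HMat k W)) '' 𝒲)

/-- A deterministic sequentially interactive protocol over `n` users: to each user `t`
and each message prefix it assigns a channel. -/
def Protocol (k n : ℕ) (𝒴 : Type*) : Type _ :=
  (t : Fin n) → (Fin t.val → 𝒴) → Fin (2 * k) → 𝒴 → ℝ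

/-- All channels used by the protocol belong to the family `𝒲`. -/
def UsesFamily {k n : ℕ} {𝒴 : Type*} (π : Protocol k n 𝒴)
    (𝒲 : Set (Fin (2 * k) → 𝒴 → ℝ)) : Prop :=
  ∀ t pre, π t pre ∈ 𝒲

/-- All kernels used by the protocol are genuine channels. -/
def ChannelProtocol {k n : ℕ} {𝒴 : Type*} [Fintype 𝒴] (π : Protocol k n 𝒴) : Prop :=
  ∀ t pre, IsChannel (π t pre)

/-- Distribution of the first `t` messages of the transcript when the inputs are
i.i.d. with law `p`. -/
noncomputable def prefixDist {k n : ℕ} {𝒴 : Type*} [Fintype 𝒴] (π : Protocol k n 𝒴)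
    (p : Fin (2 * k) → ℝ) (t : ℕ) (ht : t ≤ n) (y : Fin t → 𝒴) : ℝ :=
  ∏ s : Fin t, ∑ x, p x *
    π ⟨s.val, lt_of_lt_of_le s.isLt ht⟩ (fun r => y ⟨r.val, lt_trans r.isLt s.isLt⟩) x (y s)

/-- Distribution of the full transcript `Y^n` when the inputs are i.i.d. with law `p`. -/
noncomputable def transDist {k n : ℕ} {𝒴 : Type*} [Fintype 𝒴] (π : Protocol k n 𝒴)
    (p : Fin (2 * k) → ℝ) (y : Fin n → 𝒴) : ℝ :=
  prefixDist π p n le_rfl y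

/-- The uniform distribution on `[2k]`. -/
noncomputable def uniform2k (k : ℕ) : Fin (2 * k) → ℝ := fun _ => (2 * (k : ℝ))⁻¹

/-- An `(n, ε)`-estimator using `𝒲`: a public-coin sequentially interactive protocol
(seed distribution `μ`, protocols `π u`, channels from `𝒲`) together with an estimator
`est` such that, for every input distribution `p`, the probability that the estimate is
more than `ε` away from `p` in total variation is at most `1/100`. -/
def IsEstimator {k n : ℕ} {𝒴 𝒰 : Type*} [Fintype 𝒴] [Fintype 𝒰]
    (𝒲 : Set (Fin (2 * k) → 𝒴 → ℝ)) (μ : 𝒰 → ℝ) (π : 𝒰 → Protocol k n 𝒴)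
    (est : (Fin n → 𝒴) → 𝒰 → Fin (2 * k) → ℝ) (ε : ℝ) : Prop :=
  IsDist μ ∧ (∀ u, UsesFamily (π u) 𝒲) ∧ (∀ u, ChannelProtocol (π u)) ∧
  (∀ y u, IsDist (est y u)) ∧
  ∀ p : Fin (2 * k) → ℝ, IsDist p →
    (∑ u, ∑ y : Fin n → 𝒴, μ u * (transDist (π u) p y *
      (if ε < tvDist (est y u) p then (1 : ℝ) else 0))) ≤ 1 / 100

/-- An `(n, ε)`-uniformity test using `𝒲`: a public-coin sequentially interactive
protocol together with a randomized decision rule `T` (probability of output `1`)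
accepting uniform and rejecting `ε`-far distributions with probability `99/100`. -/
def IsUnifTest {k n : ℕ} {𝒴 𝒰 : Type*} [Fintype 𝒴] [Fintype 𝒰]
    (𝒲 : Set (Fin (2 * k) → 𝒴 → ℝ)) (μ : 𝒰 → ℝ) (π : 𝒰 → Protocol k n 𝒴)
    (T : (Fin n → 𝒴) → 𝒰 → ℝ) (ε : ℝ) : Prop :=
  IsDist μ ∧ (∀ u, UsesFamily (π u) 𝒲) ∧ (∀ u, ChannelProtocol (π u)) ∧
  (∀ y u, T y u ∈ Set.Icc (0 : ℝ) 1) ∧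
  (99 / 100 ≤ ∑ u, ∑ y : Fin n → 𝒴, μ u * (transDist (π u) (uniform2k k) y * (1 - T y u))) ∧
  ∀ p : Fin (2 * k) → ℝ, IsDist p → ε ≤ tvDist p (uniform2k k) →
    99 / 100 ≤ ∑ u, ∑ y : Fin n → 𝒴, μ u * (transDist (π u) p y * T y u)

/-- Mutual information (in nats) of a joint mass function on `A × B`. -/
noncomputable def miNats {A B : Type*} [Fintype A] [Fintype B] (j : A → B → ℝ) : ℝ :=
  ∑ a, ∑ b, j a b * Real.log (j a b / ((∑ b', j a b') * (∑ a', j a' b)))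

/-- Mutual information (in bits) of a joint mass function on `A × B`. -/
noncomputable def miBits {A B : Type*} [Fintype A] [Fintype B] (j : A → B → ℝ) : ℝ :=
  ∑ a, ∑ b, j a b * Real.logb 2 (j a b / ((∑ b', j a b') * (∑ a', j a' b)))

/-- Binary entropy function (in bits). -/
noncomputable def binEnt (t : ℝ) : ℝ :=
  -(t * Real.logb 2 t) - (1 - t) * Real.logb 2 (1 - t)

/-- `±1` encoding of a Boolean. -/
def pm (b : Bool) : ℝ := if b then 1 else -1

/-- The joint mass function of `(Z_i, Y)` obtained from a joint mass function of `(Z, Y)`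
for `Z ∈ {−1,+1}^k` (encoded via Booleans). -/
noncomputable def coordJoint {k : ℕ} {𝒴 : Type*} [Fintype 𝒴]
    (j : (Fin k → Bool) → 𝒴 → ℝ) (i : Fin k) : Bool → 𝒴 → ℝ :=
  fun b y => ∑ z : Fin k → Bool, if z i = b then j z y else 0

/-- The Paninski perturbation `p_z` of the uniform distribution on `[2k]`:
`p_z(2i−1) = (1+2ε z_i)/(2k)` and `p_z(2i) = (1−2ε z_i)/(2k)` (1-indexed). -/
noncomputable def paninski (k : ℕ) (ε : ℝ) (z : Fin k → Bool) : Fin (2 * k) → ℝ :=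
  fun x => (1 + (if x.val % 2 = 0 then (1 : ℝ) else -1) * (2 * ε) *
    pm (z ⟨x.val / 2, by have := x.isLt; omega⟩)) / (2 * k)

/-- Chi-square divergence between mass functions on a finite type. -/
noncomputable def chiSq {α : Type*} [Fintype α] (P Q : α → ℝ) : ℝ :=
  ∑ y, (P y - Q y) ^ 2 / Q y

/-- Kullback–Leibler divergence (in nats) between mass functions on a finite type. -/
noncomputable def klDivNats {α : Type*} [Fintype α] (P Q : α → ℝ) : ℝ :=
  ∑ y, P y * Real.log (P y / Q y)

/-- The leaky-query channel `W_u^η` on output alphabet `[2k] ∪ {1*, 0*}`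
(`Sum.inr true = 1*`, `Sum.inr false = 0*`). -/
noncomputable def leaky (k : ℕ) (η : ℝ) (u : Fin (2 * k) → ℝ) :
    Fin (2 * k) → (Fin (2 * k) ⊕ Bool) → ℝ :=
  fun x y => Sum.elim (fun x' => if x' = x then η else 0)
    (fun b => if b then (1 - η) * u x else (1 - η) * (1 - u x)) y

/-- The vector `δ(u)` associated with a leaky-query channel. -/
noncomputable def leakyDelta (k : ℕ) (u : Fin (2 * k) → ℝ) : Fin k → ℝ :=
  fun i => (u (lo i) - u (hi i)) *
    Real.sqrt ((2 * (k : ℝ)) / ((∑ x, u x) * (2 * (k : ℝ) - ∑ x, u x)))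

/-- The partial-erasure channel `W_{x*}` on output alphabet `[2k] ∪ {⊥}`. -/
noncomputable def eraseCh (k : ℕ) (η : ℝ) (xs : Fin (2 * k)) :
    Fin (2 * k) → (Fin (2 * k) ⊕ Unit) → ℝ :=
  fun x y => Sum.elim (fun x' => if x' = x then (if x = xs then 1 else η) else 0)
    (fun _ => if x = xs then 0 else 1 - η) y

/-- The family of all `ρ`-locally differentially private channels from `[2k]` to `𝒴`. -/
def ldpFamily (k : ℕ) {𝒴 : Type*} [Fintype 𝒴] (ρ : ℝ) :
    Set (Fin (2 * k) → 𝒴 → ℝ) :=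
  { W | IsChannel W ∧ ∀ x x' y, W x y ≤ Real.exp ρ * W x' y }

theorem sum_eq_sum_lo_add_hi {M : Type*} [AddCommMonoid M] {k : ℕ} (f : Fin (2 * k) → M) :
    ∑ x, f x = ∑ i, (f (lo i) + f (hi i)) := by
  rw [← (finProdFinEquiv.trans (finCongr (Nat.mul_comm k 2))).sum_comp, Fintype.sum_prod_type]
  refine sum_congr rfl fun i _ => ?_
  rw [Fin.sum_univ_two]
  congr 2 <;> ext <;> simp [lo, hi, add_comm]

theorem exists_eq_lo_or_eq_hi {k : ℕ} (x : Fin (2 * k)) : ∃ i, x = lo i ∨ x = hi i :=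
  ⟨⟨x / 2, by omega⟩, by simp only [lo, hi, Fin.ext_iff]; omega⟩

theorem pm_not (b : Bool) : pm (!b) = -pm b := by cases b <;> simp [pm]

theorem pm_sq (b : Bool) : pm b ^ 2 = 1 := by cases b <;> simp [pm]

theorem neg_one_le_pm (b : Bool) : -1 ≤ pm b := by cases b <;> simp [pm]

theorem pm_le_one (b : Bool) : pm b ≤ 1 := by cases b <;> simp [pm]

section Paninski

variable {k : ℕ} (ε : ℝ) (z : Fin k → Bool) (i : Fin k)

theorem paninski_lo : paninski k ε z (lo i) = (1 + 2 * ε * pm (z i)) / (2 * k) := by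
  simp [paninski, lo]

theorem paninski_hi : paninski k ε z (hi i) = (1 - 2 * ε * pm (z i)) / (2 * k) := by
  have : (⟨(2 * i.val + 1) / 2, by omega⟩ : Fin k) = i := Fin.ext (by dsimp only; omega)
  simp [paninski, hi, this, Nat.add_mod]
  ring

theorem paninski_update_of_ne (b : Bool) {x : Fin (2 * k)} (hlo : x ≠ lo i) (hhi : x ≠ hi i) :
    paninski k ε (Function.update z i b) x = paninski k ε z x := by
  obtain ⟨j, rfl | rfl⟩ := exists_eq_lo_or_eq_hi x
  · have hj : j ≠ i := by rintro rfl; exact hlo rfl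
    rw [paninski_lo, paninski_lo, Function.update_of_ne hj]
  · have hj : j ≠ i := by rintro rfl; exact hhi rfl
    rw [paninski_hi, paninski_hi, Function.update_of_ne hj]

theorem one_sub_div_le_paninski (hε : 0 ≤ ε) (x : Fin (2 * k)) :
    (1 - 2 * ε) / (2 * k) ≤ paninski k ε z x := by
  obtain ⟨j, rfl | rfl⟩ := exists_eq_lo_or_eq_hi x
  · rw [paninski_lo]
    refine div_le_div_of_nonneg_right ?_ (by positivity)
    nlinarith [mul_le_mul_of_nonneg_left (neg_one_le_pm (z j)) hε]
  · rw [paninski_hi]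
    refine div_le_div_of_nonneg_right ?_ (by positivity)
    nlinarith [mul_le_mul_of_nonneg_left (pm_le_one (z j)) hε]

theorem sum_paninski (hk : 0 < k) : ∑ x, paninski k ε z x = 1 := by
  have hk' : (k : ℝ) ≠ 0 := by exact_mod_cast hk.ne'
  simp only [sum_eq_sum_lo_add_hi, paninski_lo, paninski_hi, ← add_div, add_add_sub_cancel,
    sum_const, card_univ, Fintype.card_fin, nsmul_eq_mul]
  field_simp
  ring

theorem isDist_paninski (hk : 0 < k) (hε : 0 ≤ ε) (hε' : ε ≤ 1 / 2) : IsDist (paninski k ε z) :=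
  ⟨fun x => (div_nonneg (by linarith) (by positivity)).trans (one_sub_div_le_paninski ε z hε x),
    sum_paninski ε z hk⟩

theorem one_div_four_mul_le_paninski (hε : 0 ≤ ε) (hε' : ε ≤ 1 / 4) (x : Fin (2 * k)) :
    1 / (4 * k) ≤ paninski k ε z x :=
  calc 1 / (4 * k : ℝ) = (1 / 2) / (2 * k) := by ring
    _ ≤ (1 - 2 * ε) / (2 * k) := by gcongr; linarith
    _ ≤ paninski k ε z x := one_sub_div_le_paninski ε z hε x

end Paninski

section OutputDist

variable {α 𝒴 : Type*} [Fintype α]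

noncomputable def outputDist (W : α → 𝒴 → ℝ) (p : α → ℝ) : 𝒴 → ℝ :=
  fun y => ∑ x, p x * W x y

theorem IsDist.outputDist [Fintype 𝒴] {W : α → 𝒴 → ℝ} {p : α → ℝ} (hp : IsDist p)
    (hW : IsChannel W) : IsDist (outputDist W p) := by
  refine ⟨fun y => sum_nonneg fun x _ => mul_nonneg (hp.1 x) ((hW x).1 y), ?_⟩
  simp only [Paper.outputDist]
  rw [sum_comm]
  simp [← mul_sum, (hW _).2, hp.2]

theorem mul_sum_le_outputDist {W : α → 𝒴 → ℝ} {p : α → ℝ} {a : ℝ} {y : 𝒴}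
    (hW : ∀ x, 0 ≤ W x y) (hp : ∀ x, a ≤ p x) : a * ∑ x, W x y ≤ outputDist W p y := by
  rw [mul_sum]
  exact sum_le_sum fun x _ => mul_le_mul_of_nonneg_right (hp x) (hW x)

theorem outputDist_eq_zero_of_sum_eq_zero {W : α → 𝒴 → ℝ} (p : α → ℝ) {y : 𝒴}
    (hW : ∀ x, 0 ≤ W x y) (h : ∑ x, W x y = 0) : outputDist W p y = 0 := by
  have hzero := (sum_eq_zero_iff_of_nonneg fun x _ => hW x).1 h
  simp [Paper.outputDist, hzero]

theorem outputDist_paninski_sub_update {k : ℕ} (W : Fin (2 * k) → 𝒴 → ℝ) (ε : ℝ)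
    (z : Fin k → Bool) (i : Fin k) (y : 𝒴) :
    outputDist W (paninski k ε z) y - outputDist W (paninski k ε (Function.update z i !z i)) y
      = 2 * ε * pm (z i) / k * (W (lo i) y - W (hi i) y) := by
  have hne : lo i ≠ hi i := by simp [lo, hi, Fin.ext_iff]
  simp only [Paper.outputDist, ← sum_sub_distrib, ← sub_mul]
  rw [Fintype.sum_eq_add (lo i) (hi i) hne fun x hx => by
    rw [paninski_update_of_ne ε z i _ hx.1 hx.2, sub_self, zero_mul]]
  simp only [paninski_lo, paninski_hi, Function.update_self, pm_not]
  ring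

end OutputDist

section Divergence

variable {α : Type*} [Fintype α] {P Q : α → ℝ}

theorem chiSq_le_sum_div_of_le {R : α → ℝ} (hR : ∀ a, 0 ≤ R a) (hRQ : ∀ a, R a ≤ Q a)
    (hPQ : ∀ a, R a = 0 → P a = Q a) : chiSq P Q ≤ ∑ a, (P a - Q a) ^ 2 / R a := by
  refine sum_le_sum fun a _ => ?_
  rcases (hR a).eq_or_lt with h | h
  · simp [hPQ a h.symm]
  · exact div_le_div_of_nonneg_left (sq_nonneg _) h (hRQ a)

theorem klDivNats_le_chiSq (hP : ∀ a, 0 ≤ P a) (hQ : ∀ a, 0 ≤ Q a)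
    (hsum : ∑ a, P a = ∑ a, Q a) : klDivNats P Q ≤ chiSq P Q := by
  have key : ∀ a, P a * Real.log (P a / Q a) ≤ (P a - Q a) ^ 2 / Q a + (P a - Q a) := by
    intro a
    -- no absolute continuity is needed: at `Q a = 0` the left side is `P a * log 0 = 0`
    rcases (hQ a).eq_or_lt with hq | hq
    · simpa [← hq] using hP a
    rcases (hP a).eq_or_lt with hp | hp
    · simp [← hp, sq, hq.ne']
    calc P a * Real.log (P a / Q a) ≤ P a * (P a / Q a - 1) :=
          mul_le_mul_of_nonneg_left (Real.log_le_sub_one_of_pos (div_pos hp hq)) hp.le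
      _ = (P a - Q a) ^ 2 / Q a + (P a - Q a) := by field_simp; ring
  calc klDivNats P Q ≤ ∑ a, ((P a - Q a) ^ 2 / Q a + (P a - Q a)) := sum_le_sum fun a _ => key a
    _ = chiSq P Q := by rw [sum_add_distrib, sum_sub_distrib, hsum, sub_self, add_zero, chiSq]

end Divergence

theorem sum_sq_div_eq_mul_HMat {k : ℕ} {𝒴 : Type*} [Fintype 𝒴] {W : Fin (2 * k) → 𝒴 → ℝ}
    {P Q : 𝒴 → ℝ} {i : Fin k} {a c : ℝ} (h : ∀ y, P y - Q y = c * (W (lo i) y - W (hi i) y)) :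
    ∑ y, (P y - Q y) ^ 2 / (a * ∑ x, W x y) = c ^ 2 / a * HMat k W i i := by
  rw [HMat, mul_sum]
  exact sum_congr rfl fun y _ => by rw [h]; ring

/-- For a channel `W`, a sign vector `z`, and a coordinate `i`,
with `z^{⊕i}` denoting `z` with the `i`-th coordinate flipped,
`χ²(W∘p_z ‖ W∘p_{z^{⊕i}}) ≤ (16ε²/k) H(W)_{i,i}` and the same bound holds for the
KL divergence (in nats). -/
theorem chisq_kl_flip_bound
    (k : ℕ) (hk : 1 ≤ k) (ε : ℝ) (hε : 0 < ε) (hε' : ε ≤ 1 / 4)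
    (𝒴 : Type) [Fintype 𝒴]
    (W : Fin (2 * k) → 𝒴 → ℝ) (hW : IsChannel W)
    (z : Fin k → Bool) (i : Fin k) :
    chiSq (fun y => ∑ x, paninski k ε z x * W x y)
        (fun y => ∑ x, paninski k ε (Function.update z i (!(z i))) x * W x y)
      ≤ 16 * ε ^ 2 / (k : ℝ) * HMat k W i i ∧
    klDivNats (fun y => ∑ x, paninski k ε z x * W x y)
        (fun y => ∑ x, paninski k ε (Function.update z i (!(z i))) x * W x y)
      ≤ 16 * ε ^ 2 / (k : ℝ) * HMat k W i i := by
  set z' := Function.update z i (!(z i))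
  have hP := (isDist_paninski ε z hk hε.le (by linarith)).outputDist hW
  have hQ := (isDist_paninski ε z' hk hε.le (by linarith)).outputDist hW
  have hchi : chiSq (outputDist W (paninski k ε z)) (outputDist W (paninski k ε z'))
      ≤ 16 * ε ^ 2 / k * HMat k W i i :=
    calc _ ≤ ∑ y, (outputDist W (paninski k ε z) y - outputDist W (paninski k ε z') y) ^ 2
            / (1 / (4 * k) * ∑ x, W x y) := by
          refine chiSq_le_sum_div_of_le (fun y => ?_) (fun y => ?_) (fun y hy => ?_)
          · exact mul_nonneg (by positivity) (sum_nonneg fun x _ => (hW x).1 y)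
          · exact mul_sum_le_outputDist (fun x => (hW x).1 y)
              (one_div_four_mul_le_paninski ε z' hε.le hε')
          · have hS := (mul_eq_zero.1 hy).resolve_left (by positivity)
            rw [outputDist_eq_zero_of_sum_eq_zero _ (fun x => (hW x).1 y) hS,
              outputDist_eq_zero_of_sum_eq_zero _ (fun x => (hW x).1 y) hS]
      _ = (2 * ε * pm (z i) / k) ^ 2 / (1 / (4 * k)) * HMat k W i i :=
          sum_sq_div_eq_mul_HMat (outputDist_paninski_sub_update W ε z i)
      _ = 16 * ε ^ 2 / k * HMat k W i i := by
          rw [div_pow, mul_pow, pm_sq]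
          field_simp
          ring
  exact ⟨hchi, (klDivNats_le_chiSq hP.1 hQ.1 (hP.2.trans hQ.2.symm)).trans hchi⟩

end Paper
end

section
/- Let k ≥ 1, η ∈ [0,1), and u ∈ [0,1]^{2k} with 0 < ‖u‖₁ < 2k, where ‖u‖₁ = Σ_{x∈[2k]} u_x. Then the channel information matrix of the leaky-query channel W_u^η satisfies H(W_u^η) = 2η·I_k + (1−η)·δ(u)δ(u)ᵀ, where δ(u) ∈ ℝ^k has coordinates δ(u)_i = (u_{2i−1} − u_{2i}) · √( 2k / (‖u‖₁ (2k − ‖u‖₁)) ). Consequently, the eigenvalues of H(W_u^η) are 2η with multiplicity at least k−1 together with 2η + (1−η)‖δ(u)‖₂², and moreover ‖δ(u)‖₂² ≤ 2, with equality when |u_{2i−1} − u_{2i}| = 1 for every i ∈ [k] and ‖u‖₁ = k. -/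
open Finset

/-!
Splitting the outputs into the direct ones `[2k]` and the query ones `{1*, 0*}` splits `H` into a
sum, and `H` is homogeneous in the channel, so `H(W_u^η) = η H(id) + (1 − η) H(Q_u)` for the
identity channel and the binary query channel `Q_u(1*|x) = u_x`. The identity channel gives
`2 I_k`. With `d_i = u_{2i−1} − u_{2i}`, both query outputs contribute `d dᵀ`, weighted by
`1/‖u‖₁` and `1/(2k − ‖u‖₁)`, which adds up to `δ δᵀ`. A matrix `c I + r w wᵀ` has characteristic
polynomial `(X − c)^{k−1} (X − c − r‖w‖²)`, which gives the spectrum. Finally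
`(a − b)² ≤ 2(a + b) − (a + b)²` on `[0,1]²` and Cauchy–Schwarz for the pair sums `a + b` give
`k ‖d‖² ≤ ‖u‖₁ (2k − ‖u‖₁)`, that is `‖δ‖² ≤ 2`.
-/

namespace Matrix

open Polynomial

variable {n R : Type*} [Fintype n] [DecidableEq n] [Nonempty n] [CommRing R]

theorem charpoly_scalar_add_vecMulVec (c : R) (u v : n → R) :
    (scalar n c + vecMulVec u v).charpoly
      = (X - C (c + u ⬝ᵥ v)) * (X - C c) ^ (Fintype.card n - 1) := by
  obtain ⟨m, hm⟩ : ∃ m, Fintype.card n = m + 1 := Nat.exists_eq_add_one.mpr Fintype.card_pos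
  have hshift := charpoly_sub_scalar (vecMulVec u v) (-c)
  rw [map_neg, sub_neg_eq_add, add_comm] at hshift
  rw [hshift, charpoly_vecMulVec, hm, Nat.add_sub_cancel, smul_eq_C_mul]
  simp only [sub_comp, mul_comp, pow_comp, X_comp, C_comp, map_neg, ← sub_eq_add_neg, map_add]
  ring

theorem IsHermitian.eigenvalues_smul_one_add_smul_vecMulVec {A : Matrix n n ℝ}
    (hA : A.IsHermitian) {c r : ℝ} {w : n → ℝ} (h : A = c • 1 + r • vecMulVec w w) :
    univ.val.map hA.eigenvalues
      = (c + r * ∑ i, w i ^ 2) ::ₘ Multiset.replicate (Fintype.card n - 1) c := by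
  have hroots := hA.roots_charpoly_eq_eigenvalues
  rw [RCLike.ofReal_real_eq_id, Function.id_comp] at hroots
  have hne : (X - C (c + r • w ⬝ᵥ w)) * (X - C c) ^ (Fintype.card n - 1) ≠ 0 :=
    mul_ne_zero (X_sub_C_ne_zero _) (pow_ne_zero _ (X_sub_C_ne_zero _))
  rw [← hroots, h, smul_one_eq_diagonal, ← scalar_apply, ← smul_vecMulVec,
    charpoly_scalar_add_vecMulVec, roots_mul hne, roots_X_sub_C, roots_pow, roots_X_sub_C,
    Multiset.nsmul_singleton]
  simp [dotProduct, mul_sum, sq, mul_assoc]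

end Matrix

namespace Paper

@[simp] lemma lo_inj {k : ℕ} {i j : Fin k} : lo i = lo j ↔ i = j := by
  simp [lo, Fin.ext_iff]

@[simp] lemma hi_inj {k : ℕ} {i j : Fin k} : hi i = hi j ↔ i = j := by
  simp [hi, Fin.ext_iff]

@[simp] lemma lo_ne_hi {k : ℕ} (i j : Fin k) : lo i ≠ hi j := by
  simp only [lo, hi, ne_eq, Fin.ext_iff]; omega

@[simp] lemma hi_ne_lo {k : ℕ} (i j : Fin k) : hi i ≠ lo j := (lo_ne_hi j i).symm

theorem sum_lo_add_hi {k : ℕ} {M : Type*} [AddCommMonoid M] (f : Fin (2 * k) → M) :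
    ∑ x, f x = ∑ i, (f (lo i) + f (hi i)) := by
  rw [← ((finProdFinEquiv (m := k) (n := 2)).trans (finCongr (Nat.mul_comm k 2))).sum_comp,
    Fintype.sum_prod_type]
  refine sum_congr rfl fun i _ => ?_
  rw [Fin.sum_univ_two]
  congr 2 <;> ext <;> simp [lo, hi, finProdFinEquiv, add_comm]

section HMat

variable {k : ℕ} {𝒴 𝒵 : Type*} [Fintype 𝒴] [Fintype 𝒵]

theorem isHermitian_HMat (W : Fin (2 * k) → 𝒴 → ℝ) : (HMat k W).IsHermitian := by
  ext i j
  simp only [Matrix.conjTranspose_apply, star_trivial, HMat, mul_comm]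

theorem HMat_smul (a : ℝ) (W : Fin (2 * k) → 𝒴 → ℝ) : HMat k (a • W) = a • HMat k W := by
  ext i j
  simp only [HMat, Matrix.smul_apply, Pi.smul_apply, smul_eq_mul, ← mul_sub, ← mul_sum]
  rw [mul_sum]
  refine sum_congr rfl fun y _ => ?_
  rcases eq_or_ne a 0 with rfl | ha
  · simp
  · field_simp

theorem HMat_sumElim (V : Fin (2 * k) → 𝒴 → ℝ) (W : Fin (2 * k) → 𝒵 → ℝ) :
    HMat k (fun x => Sum.elim (V x) (W x)) = HMat k V + HMat k W := by
  ext i j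
  simp only [HMat, Matrix.add_apply, Fintype.sum_sum_type, Sum.elim_inl, Sum.elim_inr]

end HMat

def idChannel (k : ℕ) : Fin (2 * k) → Fin (2 * k) → ℝ := fun x y => if y = x then 1 else 0

def queryChannel {k : ℕ} (u : Fin (2 * k) → ℝ) : Fin (2 * k) → Bool → ℝ :=
  fun x b => if b then u x else 1 - u x

theorem HMat_idChannel (k : ℕ) : HMat k (idChannel k) = (2 : ℝ) • 1 := by
  ext i j
  simp only [HMat, idChannel, sum_ite_eq, mem_univ, if_true, div_one]
  rw [sum_lo_add_hi]
  rcases eq_or_ne i j with rfl | hij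
  · simp +contextual [sum_add_distrib, one_add_one_eq_two]
  · simp +contextual [hij, Ne.symm hij]

theorem HMat_queryChannel {k : ℕ} (u : Fin (2 * k) → ℝ) (h1 : 0 < ∑ x, u x)
    (h2 : ∑ x, u x < 2 * k) :
    HMat k (queryChannel u) = Matrix.vecMulVec (leakyDelta k u) (leakyDelta k u) := by
  ext i j
  simp only [HMat, queryChannel, Fintype.sum_bool, if_true, Bool.false_eq_true, if_false,
    sum_sub_distrib, sum_const, card_univ, Fintype.card_fin, Matrix.vecMulVec_apply, leakyDelta]
  set S := ∑ x, u x
  have hc : 0 ≤ 2 * (k : ℝ) / (S * (2 * k - S)) :=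
    div_nonneg (by positivity) (mul_pos h1 (by linarith)).le
  rw [mul_mul_mul_comm, Real.mul_self_sqrt hc, nsmul_eq_mul, mul_one, Nat.cast_mul, Nat.cast_ofNat]
  have : 2 * (k : ℝ) - S ≠ 0 := by linarith
  field_simp
  ring

theorem leaky_eq (k : ℕ) (η : ℝ) (u : Fin (2 * k) → ℝ) :
    leaky k η u = fun x => Sum.elim ((η • idChannel k) x) (((1 - η) • queryChannel u) x) := by
  ext x (y | b)
  · simp [leaky, idChannel, eq_comm]
  · cases b <;> simp [leaky, queryChannel]

theorem HMat_leaky {k : ℕ} (η : ℝ) (u : Fin (2 * k) → ℝ) (h1 : 0 < ∑ x, u x)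
    (h2 : ∑ x, u x < 2 * k) :
    HMat k (leaky k η u)
      = (2 * η) • (1 : Matrix (Fin k) (Fin k) ℝ)
        + (1 - η) • Matrix.vecMulVec (leakyDelta k u) (leakyDelta k u) := by
  rw [leaky_eq, HMat_sumElim, HMat_smul, HMat_smul, HMat_idChannel, HMat_queryChannel u h1 h2,
    smul_smul, mul_comm]

section leakyDelta

variable {k : ℕ} {u : Fin (2 * k) → ℝ}

theorem sum_leakyDelta_sq (h1 : 0 ≤ ∑ x, u x) (h2 : ∑ x, u x ≤ 2 * k) :
    ∑ i, leakyDelta k u i ^ 2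
      = (∑ i, (u (lo i) - u (hi i)) ^ 2) * (2 * k / ((∑ x, u x) * (2 * k - ∑ x, u x))) := by
  have hc : 0 ≤ 2 * (k : ℝ) / ((∑ x, u x) * (2 * k - ∑ x, u x)) :=
    div_nonneg (by positivity) (mul_nonneg h1 (by linarith))
  rw [sum_mul]
  refine sum_congr rfl fun i _ => ?_
  rw [leakyDelta, mul_pow, Real.sq_sqrt hc]

theorem mul_sum_sub_sq_le (hu : ∀ x, u x ∈ Set.Icc (0 : ℝ) 1) :
    k * ∑ i, (u (lo i) - u (hi i)) ^ 2 ≤ (∑ x, u x) * (2 * k - ∑ x, u x) := by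
  have hpair : ∀ i, (u (lo i) - u (hi i)) ^ 2
      ≤ 2 * (u (lo i) + u (hi i)) - (u (lo i) + u (hi i)) ^ 2 := by
    intro i
    obtain ⟨ha0, ha1⟩ := hu (lo i)
    obtain ⟨hb0, hb1⟩ := hu (hi i)
    nlinarith
  have hsum := sum_le_sum fun i (_ : i ∈ univ) => hpair i
  have hcs := sq_sum_le_card_mul_sum_sq (s := univ) (f := fun i => u (lo i) + u (hi i))
  rw [sum_sub_distrib, ← mul_sum, ← sum_lo_add_hi] at hsum
  rw [← sum_lo_add_hi, card_univ, Fintype.card_fin] at hcs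
  nlinarith [(Nat.cast_nonneg k : (0 : ℝ) ≤ k)]

theorem sum_leakyDelta_sq_le_two (hu : ∀ x, u x ∈ Set.Icc (0 : ℝ) 1) (h1 : 0 < ∑ x, u x)
    (h2 : ∑ x, u x < 2 * k) : ∑ i, leakyDelta k u i ^ 2 ≤ 2 := by
  have hpos : 0 < (∑ x, u x) * (2 * k - ∑ x, u x) := mul_pos h1 (by linarith)
  rw [sum_leakyDelta_sq h1.le h2.le, mul_div_assoc', div_le_iff₀ hpos]
  linarith [mul_sum_sub_sq_le hu]

theorem sum_leakyDelta_sq_eq_two [NeZero k] (habs : ∀ i, |u (lo i) - u (hi i)| = 1)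
    (hS : ∑ x, u x = k) : ∑ i, leakyDelta k u i ^ 2 = 2 := by
  have hk : (k : ℝ) ≠ 0 := Nat.cast_ne_zero.mpr (NeZero.ne k)
  have hsq : ∀ i, (u (lo i) - u (hi i)) ^ 2 = 1 := fun i => by rw [← sq_abs, habs, one_pow]
  rw [sum_leakyDelta_sq (by rw [hS]; positivity) (by rw [hS]; linarith), hS]
  simp only [hsq, sum_const, card_univ, Fintype.card_fin, nsmul_eq_mul, mul_one]
  field_simp
  ring

end leakyDelta

theorem leaky_query_channel_matrix_general
    (k : ℕ) (hk : 1 ≤ k) (η : ℝ)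
    (u : Fin (2 * k) → ℝ) (hu : ∀ x, u x ∈ Set.Icc (0 : ℝ) 1)
    (h1 : 0 < ∑ x, u x) (h2 : ∑ x, u x < 2 * (k : ℝ)) :
    HMat k (leaky k η u)
        = (2 * η) • (1 : Matrix (Fin k) (Fin k) ℝ)
          + (1 - η) • Matrix.vecMulVec (leakyDelta k u) (leakyDelta k u) ∧
      (∃ hH : (HMat k (leaky k η u)).IsHermitian,
        Finset.univ.val.map hH.eigenvalues =
          (2 * η + (1 - η) * ∑ i : Fin k, (leakyDelta k u i) ^ 2) ::ₘ
            Multiset.replicate (k - 1) (2 * η)) ∧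
      (∑ i : Fin k, (leakyDelta k u i) ^ 2 ≤ 2) ∧
      ((∀ i : Fin k, |u (lo i) - u (hi i)| = 1) ∧ (∑ x, u x) = (k : ℝ) →
        ∑ i : Fin k, (leakyDelta k u i) ^ 2 = 2) := by
  have : NeZero k := ⟨by omega⟩
  have hH := HMat_leaky η u h1 h2
  have heig := (isHermitian_HMat (leaky k η u)).eigenvalues_smul_one_add_smul_vecMulVec hH
  rw [Fintype.card_fin] at heig
  exact ⟨hH, ⟨_, heig⟩, sum_leakyDelta_sq_le_two hu h1 h2,
    fun ⟨habs, hS⟩ => sum_leakyDelta_sq_eq_two habs hS⟩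

/-- Structure of the channel information matrix of the leaky-query
channel: `H(W_u^η) = 2η I_k + (1−η) δ(u)δ(u)ᵀ`; its eigenvalues are `2η` with
multiplicity `k−1` together with `2η + (1−η)‖δ(u)‖₂²`; and `‖δ(u)‖₂² ≤ 2`, with
equality when `|u_{2i−1} − u_{2i}| = 1` for all `i` and `‖u‖₁ = k`. -/
theorem leaky_query_channel_matrix
    (k : ℕ) (hk : 1 ≤ k) (η : ℝ) (hη0 : 0 ≤ η) (hη1 : η < 1)
    (u : Fin (2 * k) → ℝ) (hu : ∀ x, u x ∈ Set.Icc (0 : ℝ) 1)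
    (h1 : 0 < ∑ x, u x) (h2 : ∑ x, u x < 2 * (k : ℝ)) :
    HMat k (leaky k η u)
        = (2 * η) • (1 : Matrix (Fin k) (Fin k) ℝ)
          + (1 - η) • Matrix.vecMulVec (leakyDelta k u) (leakyDelta k u) ∧
      (∃ hH : (HMat k (leaky k η u)).IsHermitian,
        Finset.univ.val.map hH.eigenvalues =
          (2 * η + (1 - η) * ∑ i : Fin k, (leakyDelta k u i) ^ 2) ::ₘ
            Multiset.replicate (k - 1) (2 * η)) ∧
      (∑ i : Fin k, (leakyDelta k u i) ^ 2 ≤ 2) ∧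
      ((∀ i : Fin k, |u (lo i) - u (hi i)| = 1) ∧ (∑ x, u x) = (k : ℝ) →
        ∑ i : Fin k, (leakyDelta k u i) ^ 2 = 2) :=
  leaky_query_channel_matrix_general k hk η u hu h1 h2

end Paper
end
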